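/- Let E be a normed space and let f : Ω₂ⁿ → E satisfy the Lipschitz condition P²(f) ≤ 1, with f not identically zero. Define a(p) := 𝔼‖f‖_E^p for p > 0. Then a is differentiable with a′(p) = 𝔼(‖f‖_E^p · log ‖f‖_E) (convention 0^p·log 0 = 0), and for every p ≥ 2: a′(p) ≤ (1/p)·a(p)·log a(p) + p·a(p)^{1 − 2/p}. -/

import Mathlib

/-- The Hamming cube `Ω₂ⁿ = {-1,1}ⁿ`, encoded as `Fin n → Bool`. -/
abbrev Cube (n : ℕ) : Type := Fin n → Bool

/-- The sign `±1` associated to a Boolean coordinate. -/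
def sgn (b : Bool) : ℝ := if b then 1 else -1

/-- Expectation with respect to the uniform probability measure on the Hamming cube. -/
noncomputable def expect {n : ℕ} (f : Cube n → ℝ) : ℝ :=
  (∑ x : Cube n, f x) / 2 ^ n

/-- The `i`-th discrete derivative `D_i f(x) = (f(x) - f(σ_i x))/2`, where `σ_i`
flips the `i`-th coordinate. -/
noncomputable def Di {n : ℕ} {E : Type*} [AddCommGroup E] [Module ℝ E]
    (f : Cube n → E) (i : Fin n) (x : Cube n) : E :=
  ((2 : ℝ)⁻¹) • (f x - f (Function.update x i (!x i)))

open Real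

lemma expect_mono {n : ℕ} {F G : Cube n → ℝ} (h : ∀ x, F x ≤ G x) :
    expect F ≤ expect G := by
  unfold expect
  apply div_le_div_of_nonneg_right ?_ (by positivity)
  exact Finset.sum_le_sum fun x _ => h x

lemma expect_nonneg {n : ℕ} {F : Cube n → ℝ} (h : ∀ x, 0 ≤ F x) : 0 ≤ expect F :=
  div_nonneg (Finset.sum_nonneg fun x _ => h x) (by positivity)

lemma hasDerivAt_term (c : ℝ) (hc : 0 ≤ c) {p : ℝ} (hp : 0 < p) :
    HasDerivAt (fun q : ℝ => c ^ q) (c ^ p * Real.log c) p := by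
  rcases eq_or_lt_of_le hc with h0 | h0
  · have hev : (fun q : ℝ => c ^ q) =ᶠ[nhds p] fun _ => (0:ℝ) := by
      filter_upwards [eventually_gt_nhds hp] with q hq
      rw [← h0, Real.zero_rpow (ne_of_gt hq)]
    have : HasDerivAt (fun _ : ℝ => (0:ℝ)) 0 p := hasDerivAt_const _ _
    have h := this.congr_of_eventuallyEq hev
    have hv : c ^ p * Real.log c = 0 := by rw [← h0, Real.log_zero, mul_zero]
    rw [hv]; exact h
  · exact (Real.hasStrictDerivAt_const_rpow h0 p).hasDerivAt

theorem part1 {E : Type*} [NormedAddCommGroup E] [NormedSpace ℝ E] {n : ℕ} (f : Cube n → E) :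
    ∀ p : ℝ, 0 < p →
      HasDerivAt (fun q : ℝ => expect (fun x => ‖f x‖ ^ q))
        (expect (fun x => ‖f x‖ ^ p * Real.log ‖f x‖)) p := by
  intro p hp
  have : HasDerivAt (fun q : ℝ => ∑ x : Cube n, ‖f x‖ ^ q)
      (∑ x : Cube n, ‖f x‖ ^ p * Real.log ‖f x‖) p := by
    apply HasDerivAt.fun_sum
    intro x _
    exact hasDerivAt_term _ (norm_nonneg _) hp
  exact this.div_const _

-- flip
def cflip {n : ℕ} (i : Fin n) (x : Cube n) : Cube n := Function.update x i (!x i)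

lemma cflip_self {n : ℕ} (i : Fin n) (x : Cube n) : cflip i x i = !x i := by
  unfold cflip; rw [Function.update_self]

lemma cflip_ne {n : ℕ} {i j : Fin n} (h : j ≠ i) (x : Cube n) : cflip i x j = x j := by
  unfold cflip; rw [Function.update_of_ne h]

lemma cflip_invol {n : ℕ} (i : Fin n) : Function.Involutive (cflip i) := by
  intro x
  funext j
  by_cases h : j = i
  · subst h; rw [cflip_self, cflip_self, Bool.not_not]
  · rw [cflip_ne h, cflip_ne h]

lemma sum_cflip {n : ℕ} (i : Fin n) (F : Cube n → ℝ) :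
    ∑ x : Cube n, F (cflip i x) = ∑ x : Cube n, F x :=
  Fintype.sum_equiv ((cflip_invol i).toPerm _) _ _ (fun _ => rfl)

lemma sgn_not (b : Bool) : sgn (!b) = - sgn b := by cases b <;> simp [sgn]

lemma sgn_sq (b : Bool) : sgn b * sgn b = 1 := by cases b <;> simp [sgn]

lemma card_cube (n : ℕ) : (Fintype.card (Cube n) : ℝ) = 2 ^ n := by
  simp [Fintype.card_fun]

lemma sum_sgn_mul {n : ℕ} {i j : Fin n} (h : i ≠ j) :
    ∑ δ : Cube n, sgn (δ i) * sgn (δ j) = 0 := by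
  have h2 : ∀ δ : Cube n, sgn (cflip i δ i) * sgn (cflip i δ j) = -(sgn (δ i) * sgn (δ j)) := by
    intro δ
    rw [cflip_self, cflip_ne (Ne.symm h), sgn_not]
    ring
  have := sum_cflip i (fun δ => sgn (δ i) * sgn (δ j))
  rw [Fintype.sum_congr _ _ h2, Finset.sum_neg_distrib] at this
  linarith

lemma sum_sgn_mul_eq {n : ℕ} (i j : Fin n) :
    ∑ δ : Cube n, sgn (δ i) * sgn (δ j) = if i = j then (2:ℝ) ^ n else 0 := by
  by_cases h : i = j
  · subst h
    simp only [if_pos rfl, sgn_sq]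
    rw [Finset.sum_const, Finset.card_univ, nsmul_eq_mul, mul_one, card_cube]
    simp
  · rw [if_neg h]; exact sum_sgn_mul h

lemma orthog {n : ℕ} (c : Fin n → ℝ) :
    expect (fun δ : Cube n => (∑ i, sgn (δ i) * c i) ^ 2) = ∑ i, (c i) ^ 2 := by
  unfold expect
  rw [div_eq_iff (by positivity)]
  have expand : ∀ δ : Cube n, (∑ i, sgn (δ i) * c i) ^ 2
      = ∑ i, ∑ j, (sgn (δ i) * sgn (δ j)) * (c i * c j) := by
    intro δ
    rw [sq, Finset.sum_mul_sum]
    exact Finset.sum_congr rfl fun i _ => Finset.sum_congr rfl fun j _ => by ring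
  calc (∑ δ : Cube n, (∑ i, sgn (δ i) * c i) ^ 2)
      = ∑ δ : Cube n, ∑ i, ∑ j, (sgn (δ i) * sgn (δ j)) * (c i * c j) :=
        Fintype.sum_congr _ _ expand
    _ = ∑ i, ∑ j, ∑ δ : Cube n, (sgn (δ i) * sgn (δ j)) * (c i * c j) := by
        rw [Finset.sum_comm]
        exact Finset.sum_congr rfl fun i _ => Finset.sum_comm
    _ = ∑ i, ∑ j, (if i = j then (2:ℝ) ^ n else 0) * (c i * c j) := by
        refine Finset.sum_congr rfl fun i _ => Finset.sum_congr rfl fun j _ => ?_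
        rw [← Finset.sum_mul, sum_sgn_mul_eq]
    _ = ∑ i, (2:ℝ) ^ n * (c i * c i) := by
        refine Finset.sum_congr rfl fun i _ => ?_
        simp only [ite_mul, zero_mul]
        rw [Finset.sum_ite_eq]
        simp
    _ = (∑ i, (c i) ^ 2) * 2 ^ n := by
        rw [Finset.sum_mul]
        exact Finset.sum_congr rfl fun i _ => by ring

lemma dual_bound {E : Type*} [NormedAddCommGroup E] [NormedSpace ℝ E]
    (ξ : E →L[ℝ] ℝ) (hξ : ‖ξ‖ ≤ 1) (z : E) : (ξ z) ^ 2 ≤ ‖z‖ ^ 2 := by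
  have h1 : |ξ z| ≤ ‖z‖ := by
    have := ξ.le_opNorm z
    rw [Real.norm_eq_abs] at this
    nlinarith [norm_nonneg z, ξ.opNorm_nonneg]
  calc (ξ z) ^ 2 = |ξ z| ^ 2 := (sq_abs _).symm
    _ ≤ ‖z‖ ^ 2 := pow_le_pow_left₀ (abs_nonneg _) h1 2

lemma grad_bound {E : Type*} [NormedAddCommGroup E] [NormedSpace ℝ E] {n : ℕ} (f : Cube n → E)
    (hLip : ∀ x : Cube n,
      expect (fun δ : Cube n => ‖∑ i, sgn (δ i) • Di f i x‖ ^ 2) ≤ 1) (x : Cube n) :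
    ∑ i, (if ‖f (cflip i x)‖ < ‖f x‖ then (‖f x‖ - ‖f (cflip i x)‖) ^ 2 else 0) ≤ 4 := by
  obtain ⟨ξ, hξ1, hξ2⟩ := exists_dual_vector'' ℝ (f x)
  have hξ2 : ξ (f x) = ‖f x‖ := by simpa using hξ2
  set t : Fin n → ℝ := fun i => ξ (Di f i x) with ht
  have step1 : ∀ i : Fin n,
      (if ‖f (cflip i x)‖ < ‖f x‖ then (‖f x‖ - ‖f (cflip i x)‖) ^ 2 else 0) ≤ 4 * t i ^ 2 := by
    intro i
    by_cases h : ‖f (cflip i x)‖ < ‖f x‖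
    · rw [if_pos h]
      have hkey : ‖f x‖ - ‖f (cflip i x)‖ ≤ 2 * t i := by
        have h2 : ξ (f (cflip i x)) ≤ ‖f (cflip i x)‖ := by
          have := ξ.le_opNorm (f (cflip i x))
          rw [Real.norm_eq_abs] at this
          nlinarith [norm_nonneg (f (cflip i x)), le_abs_self (ξ (f (cflip i x)))]
        have h3 : (2:ℝ) * t i = ξ (f x) - ξ (f (cflip i x)) := by
          rw [ht]
          show (2:ℝ) * ξ (((2 : ℝ)⁻¹) • (f x - f (Function.update x i (!x i)))) = _
          rw [map_smul, smul_eq_mul, map_sub]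
          show (2:ℝ) * (2⁻¹ * (ξ (f x) - ξ (f (cflip i x)))) = _
          ring
        rw [h3, hξ2]
        linarith
      have h0 : 0 ≤ ‖f x‖ - ‖f (cflip i x)‖ := by linarith
      calc (‖f x‖ - ‖f (cflip i x)‖) ^ 2 ≤ (2 * t i) ^ 2 := pow_le_pow_left₀ h0 hkey 2
        _ = 4 * t i ^ 2 := by ring
    · rw [if_neg h]; positivity
  calc ∑ i, (if ‖f (cflip i x)‖ < ‖f x‖ then (‖f x‖ - ‖f (cflip i x)‖) ^ 2 else 0)
      ≤ ∑ i, 4 * t i ^ 2 := Finset.sum_le_sum fun i _ => step1 i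
    _ = 4 * ∑ i, t i ^ 2 := by rw [Finset.mul_sum]
    _ = 4 * expect (fun δ : Cube n => (∑ i, sgn (δ i) * t i) ^ 2) := by rw [orthog]
    _ ≤ 4 * expect (fun δ : Cube n => ‖∑ i, sgn (δ i) • Di f i x‖ ^ 2) := by
        have hmono : ∀ δ : Cube n, (∑ i, sgn (δ i) * t i) ^ 2
            ≤ ‖∑ i, sgn (δ i) • Di f i x‖ ^ 2 := by
          intro δ
          have : ∑ i, sgn (δ i) * t i = ξ (∑ i, sgn (δ i) • Di f i x) := by
            rw [map_sum]
            exact Finset.sum_congr rfl fun i _ => by rw [map_smul, smul_eq_mul]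
          rw [this]
          exact dual_bound ξ hξ1 _
        linarith [expect_mono hmono]
    _ ≤ 4 * 1 := by linarith [hLip x]
    _ = 4 := by norm_num

noncomputable def E2 (a b : ℝ) : ℝ :=
  (a * Real.log a + b * Real.log b) / 2 - ((a + b) / 2) * Real.log ((a + b) / 2)

lemma logSum2 {a1 b1 a2 b2 : ℝ} (ha1 : 0 ≤ a1) (ha2 : 0 ≤ a2) (hb1 : 0 ≤ b1) (hb2 : 0 ≤ b2)
    (h1 : b1 = 0 → a1 = 0) (h2 : b2 = 0 → a2 = 0) :
    (a1 + a2) * Real.log ((a1 + a2) / (b1 + b2)) ≤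
      a1 * Real.log (a1 / b1) + a2 * Real.log (a2 / b2) := by
  rcases eq_or_lt_of_le hb1 with hb1' | hb1'
  · rw [h1 hb1'.symm, ← hb1', zero_add, zero_add, zero_mul, zero_add]
  rcases eq_or_lt_of_le hb2 with hb2' | hb2'
  · rw [h2 hb2'.symm, ← hb2', add_zero, add_zero, zero_mul, add_zero]
  have hs : 0 < b1 + b2 := by linarith
  have hφ := Real.convexOn_mul_log
  have hmem1 : a1 / b1 ∈ Set.Ici (0:ℝ) := Set.mem_Ici.2 (div_nonneg ha1 hb1)
  have hmem2 : a2 / b2 ∈ Set.Ici (0:ℝ) := Set.mem_Ici.2 (div_nonneg ha2 hb2)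
  have hw1 : (0:ℝ) ≤ b1 / (b1 + b2) := div_nonneg hb1 hs.le
  have hw2 : (0:ℝ) ≤ b2 / (b1 + b2) := div_nonneg hb2 hs.le
  have hws : b1 / (b1 + b2) + b2 / (b1 + b2) = 1 := by field_simp
  have hJ := hφ.2 hmem1 hmem2 hw1 hw2 hws
  simp only [smul_eq_mul] at hJ
  have hcomb : b1 / (b1 + b2) * (a1 / b1) + b2 / (b1 + b2) * (a2 / b2) = (a1 + a2) / (b1 + b2) := by
    field_simp
  rw [hcomb] at hJ
  have hJ' := mul_le_mul_of_nonneg_left hJ hs.le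
  calc (a1 + a2) * Real.log ((a1 + a2) / (b1 + b2))
      = (b1 + b2) * ((a1 + a2) / (b1 + b2) * Real.log ((a1 + a2) / (b1 + b2))) := by
        field_simp
    _ ≤ (b1 + b2) * (b1 / (b1 + b2) * (a1 / b1 * Real.log (a1 / b1)) +
          b2 / (b1 + b2) * (a2 / b2 * Real.log (a2 / b2))) := hJ'
    _ = a1 * Real.log (a1 / b1) + a2 * Real.log (a2 / b2) := by
        field_simp

lemma E2_eq {a b : ℝ} (ha : 0 ≤ a) (hb : 0 ≤ b) :
    E2 a b = (a * Real.log (a / ((a + b) / 2)) + b * Real.log (b / ((a + b) / 2))) / 2 := by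
  have key : ∀ c : ℝ, 0 ≤ c → (a + b) / 2 ≠ 0 →
      c * Real.log (c / ((a + b) / 2)) = c * Real.log c - c * Real.log ((a + b) / 2) := by
    intro c hc hs
    rcases eq_or_lt_of_le hc with h | h
    · rw [← h]; simp
    · rw [Real.log_div (ne_of_gt h) hs]; ring
  by_cases hs : (a + b) / 2 = 0
  · have ha0 : a = 0 := by linarith [(div_eq_zero_iff.1 hs).resolve_right (by norm_num)]
    have hb0 : b = 0 := by linarith [(div_eq_zero_iff.1 hs).resolve_right (by norm_num)]
    simp [E2, ha0, hb0]
  · rw [key a ha hs, key b hb hs]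
    unfold E2
    ring

lemma E2_midpoint {a1 b1 a2 b2 : ℝ} (ha1 : 0 ≤ a1) (hb1 : 0 ≤ b1) (ha2 : 0 ≤ a2) (hb2 : 0 ≤ b2) :
    E2 ((a1 + a2) / 2) ((b1 + b2) / 2) ≤ (E2 a1 b1 + E2 a2 b2) / 2 := by
  have hhalf : ∀ u v : ℝ, u / 2 / (v / 2) = u / v := by
    intro u v
    rw [div_eq_mul_inv (u/2), inv_div, div_mul_div_comm, mul_comm u 2, mul_div_mul_left _ _ (by norm_num : (2:ℝ) ≠ 0)]
  set s1 := (a1 + b1) / 2 with hs1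
  set s2 := (a2 + b2) / 2 with hs2
  have hs1n : 0 ≤ s1 := by positivity
  have hs2n : 0 ≤ s2 := by positivity
  have hA := logSum2 (by linarith : (0:ℝ) ≤ a1 / 2) (by linarith : (0:ℝ) ≤ a2 / 2)
    (by positivity : (0:ℝ) ≤ s1 / 2) (by positivity : (0:ℝ) ≤ s2 / 2)
    (fun h => by
      have h1 : a1 + b1 = 0 := by rw [hs1] at h; linarith
      have h2 : a1 = 0 := by linarith
      rw [h2]; norm_num)
    (fun h => by
      have h1 : a2 + b2 = 0 := by rw [hs2] at h; linarith
      have h2 : a2 = 0 := by linarith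
      rw [h2]; norm_num)
  have hB := logSum2 (by linarith : (0:ℝ) ≤ b1 / 2) (by linarith : (0:ℝ) ≤ b2 / 2)
    (by positivity : (0:ℝ) ≤ s1 / 2) (by positivity : (0:ℝ) ≤ s2 / 2)
    (fun h => by
      have h1 : a1 + b1 = 0 := by rw [hs1] at h; linarith
      have h2 : b1 = 0 := by linarith
      rw [h2]; norm_num)
    (fun h => by
      have h1 : a2 + b2 = 0 := by rw [hs2] at h; linarith
      have h2 : b2 = 0 := by linarith
      rw [h2]; norm_num)
  rw [hhalf, hhalf] at hA
  rw [hhalf, hhalf] at hB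
  rw [E2_eq (by linarith : (0:ℝ) ≤ (a1+a2)/2) (by linarith : (0:ℝ) ≤ (b1+b2)/2),
      E2_eq ha1 hb1, E2_eq ha2 hb2]
  have e1 : ((a1 + a2) / 2 + (b1 + b2) / 2) / 2 = s1 / 2 + s2 / 2 := by
    rw [hs1, hs2]; ring
  rw [e1]
  have e2 : (a1 + a2) / 2 = a1 / 2 + a2 / 2 := by ring
  have e3 : (b1 + b2) / 2 = b1 / 2 + b2 / 2 := by ring
  rw [e2, e3]
  have e4 : a1 / s1 = a1 / ((a1 + b1) / 2) := by rw [hs1]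
  have e5 : (a1/2 + a2/2) / (s1/2 + s2/2) = (a1/2+a2/2)/(s1/2+s2/2) := rfl
  -- combine
  have hA' : (a1/2 + a2/2) * Real.log ((a1/2 + a2/2) / (s1/2 + s2/2)) ≤
      a1/2 * Real.log (a1 / s1) + a2/2 * Real.log (a2 / s2) := hA
  have hB' : (b1/2 + b2/2) * Real.log ((b1/2 + b2/2) / (s1/2 + s2/2)) ≤
      b1/2 * Real.log (b1 / s1) + b2/2 * Real.log (b2 / s2) := hB
  rw [hs1, hs2] at hA' hB'
  linarith

lemma E2_comm (a b : ℝ) : E2 a b = E2 b a := by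
  unfold E2
  rw [add_comm b a, add_comm (b * Real.log b)]

lemma grossCore {b : ℝ} (hb : 0 < b) {a : ℝ} (hab : b ≤ a) :
    E2 (a ^ 2) (b ^ 2) ≤ (a - b) ^ 2 / 2 := by
  set G : ℝ → ℝ := fun t => (t - b) - t * (Real.log (2 * t ^ 2) - Real.log (t ^ 2 + b ^ 2))
    with hG
  set G' : ℝ → ℝ := fun t =>
      2 * t ^ 2 / (t ^ 2 + b ^ 2) - 1 - (Real.log (2 * t ^ 2) - Real.log (t ^ 2 + b ^ 2))
    with hG'
  set F : ℝ → ℝ := fun t => (t - b) ^ 2 / 2 - E2 (t ^ 2) (b ^ 2) with hF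
  have hsq : ∀ t : ℝ, 0 < t → HasDerivAt (fun s : ℝ => s ^ 2) (2 * t) t := by
    intro t _; simpa using hasDerivAt_pow 2 t
  have hGderiv : ∀ t : ℝ, 0 < t → HasDerivAt G (G' t) t := by
    intro t ht
    have h2t : (2 * t ^ 2) ≠ 0 := by positivity
    have htb : (t ^ 2 + b ^ 2) ≠ 0 := by positivity
    have d1 : HasDerivAt (fun s : ℝ => 2 * s ^ 2) (2 * (2 * t)) t := (hsq t ht).const_mul 2
    have d2 : HasDerivAt (fun s : ℝ => Real.log (2 * s ^ 2)) ((2 * t ^ 2)⁻¹ * (2 * (2 * t))) t :=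
      by have := (Real.hasDerivAt_log h2t).comp t d1; exact this
    have d3 : HasDerivAt (fun s : ℝ => s ^ 2 + b ^ 2) (2 * t) t := (hsq t ht).add_const _
    have d4 : HasDerivAt (fun s : ℝ => Real.log (s ^ 2 + b ^ 2)) ((t ^ 2 + b ^ 2)⁻¹ * (2 * t)) t :=
      by have := (Real.hasDerivAt_log htb).comp t d3; exact this
    have d5 : HasDerivAt (fun s : ℝ => Real.log (2 * s ^ 2) - Real.log (s ^ 2 + b ^ 2))
        ((2 * t ^ 2)⁻¹ * (2 * (2 * t)) - (t ^ 2 + b ^ 2)⁻¹ * (2 * t)) t := d2.sub d4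
    have d6 : HasDerivAt (fun s : ℝ => s * (Real.log (2 * s ^ 2) - Real.log (s ^ 2 + b ^ 2)))
        (1 * (Real.log (2 * t ^ 2) - Real.log (t ^ 2 + b ^ 2)) +
          t * ((2 * t ^ 2)⁻¹ * (2 * (2 * t)) - (t ^ 2 + b ^ 2)⁻¹ * (2 * t))) t :=
      (hasDerivAt_id t).mul d5
    have d7 : HasDerivAt (fun s : ℝ => s - b) 1 t := (hasDerivAt_id t).sub_const b
    have := d7.sub d6
    convert this using 1
    case e'_4 => rfl
    case e'_5 => rfl
    case e'_8 => rfl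
    rw [hG']
    field_simp
    ring
  have hFderiv : ∀ t : ℝ, 0 < t → HasDerivAt F (G t) t := by
    intro t ht
    have h2t : (t ^ 2) ≠ 0 := by positivity
    have htb : ((t ^ 2 + b ^ 2) / 2) ≠ 0 := by positivity
    have d1 : HasDerivAt (fun s : ℝ => (s - b) ^ 2 / 2) (t - b) t := by
      have : HasDerivAt (fun s : ℝ => (s - b) ^ 2) (2 * (t - b) ^ 1 * 1) t :=
        by have := (hasDerivAt_pow 2 (t - b)).comp t ((hasDerivAt_id t).sub_const b); simpa [Function.comp_def] using this
      have h := this.div_const 2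
      exact h.congr_deriv (by ring)
    have d2 : HasDerivAt (fun s : ℝ => Real.log (s ^ 2)) ((2 * t) / t ^ 2) t :=
      (hsq t ht).log h2t
    have d3 : HasDerivAt (fun s : ℝ => s ^ 2 * Real.log (s ^ 2))
        (2 * t * Real.log (t ^ 2) + t ^ 2 * ((2 * t) / t ^ 2)) t := (hsq t ht).mul d2
    have d4 : HasDerivAt (fun s : ℝ => (s ^ 2 * Real.log (s ^ 2) + b ^ 2 * Real.log (b ^ 2)) / 2)
        ((2 * t * Real.log (t ^ 2) + t ^ 2 * ((2 * t) / t ^ 2)) / 2) t :=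
      (d3.add_const _).div_const 2
    have d5 : HasDerivAt (fun s : ℝ => (s ^ 2 + b ^ 2) / 2) (2 * t / 2) t :=
      ((hsq t ht).add_const _).div_const 2
    have d6 : HasDerivAt (fun s : ℝ => Real.log ((s ^ 2 + b ^ 2) / 2))
        ((2 * t / 2) / ((t ^ 2 + b ^ 2) / 2)) t := d5.log htb
    have d7 : HasDerivAt (fun s : ℝ => ((s ^ 2 + b ^ 2) / 2) * Real.log ((s ^ 2 + b ^ 2) / 2))
        ((2 * t / 2) * Real.log ((t ^ 2 + b ^ 2) / 2) +
          ((t ^ 2 + b ^ 2) / 2) * ((2 * t / 2) / ((t ^ 2 + b ^ 2) / 2))) t := d5.mul d6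
    have : HasDerivAt F ((t - b) - ((2 * t * Real.log (t ^ 2) + t ^ 2 * ((2 * t) / t ^ 2)) / 2
        - ((2 * t / 2) * Real.log ((t ^ 2 + b ^ 2) / 2) +
          ((t ^ 2 + b ^ 2) / 2) * ((2 * t / 2) / ((t ^ 2 + b ^ 2) / 2))))) t := by
      have : F = fun s => (s - b) ^ 2 / 2 -
          ((s ^ 2 * Real.log (s ^ 2) + b ^ 2 * Real.log (b ^ 2)) / 2 -
            ((s ^ 2 + b ^ 2) / 2) * Real.log ((s ^ 2 + b ^ 2) / 2)) := by
        funext s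
        rw [hF]
        unfold E2
        ring
      rw [this]
      exact d1.sub (d4.sub d7)
    convert this using 1
    have hGt : G t = (t - b) - t * (Real.log (2 * t ^ 2) - Real.log (t ^ 2 + b ^ 2)) := rfl
    rw [hGt]
    have hlog1 : Real.log (2 * t ^ 2) = Real.log 2 + Real.log (t ^ 2) :=
      Real.log_mul (by norm_num) h2t
    have hlog2 : Real.log ((t ^ 2 + b ^ 2) / 2) = Real.log (t ^ 2 + b ^ 2) - Real.log 2 :=
      Real.log_div (by positivity) (by norm_num)
    rw [hlog1, hlog2]
    field_simp
    ring
  -- G' ≥ 0 on (b, ∞)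
  have hG'nonneg : ∀ t : ℝ, 0 < t → 0 ≤ G' t := by
    intro t ht
    have hy : 0 < 2 * t ^ 2 / (t ^ 2 + b ^ 2) := by positivity
    have hlog : Real.log (2 * t ^ 2) - Real.log (t ^ 2 + b ^ 2)
        = Real.log (2 * t ^ 2 / (t ^ 2 + b ^ 2)) := (Real.log_div (by positivity) (by positivity)).symm
    rw [hG']
    simp only
    rw [hlog]
    have := Real.log_le_sub_one_of_pos hy
    linarith
  -- G is monotone on Ici b hence nonneg
  have hGmono : MonotoneOn G (Set.Ici b) := by
    apply monotoneOn_of_deriv_nonneg (convex_Ici b)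
    · intro t htmem
      exact (hGderiv t (lt_of_lt_of_le hb htmem)).continuousAt.continuousWithinAt
    · intro t htmem
      rw [interior_Ici] at htmem
      exact (hGderiv t (lt_trans hb htmem)).differentiableAt.differentiableWithinAt
    · intro t htmem
      rw [interior_Ici] at htmem
      rw [(hGderiv t (lt_trans hb htmem)).deriv]
      exact hG'nonneg t (lt_trans hb htmem)
  have hGb : G b = 0 := by
    rw [hG]
    simp only
    have : b ^ 2 + b ^ 2 = 2 * b ^ 2 := by ring
    rw [this]
    ring
  have hGnonneg : ∀ t ∈ Set.Ici b, 0 ≤ G t := by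
    intro t htmem
    have := hGmono (Set.self_mem_Ici) htmem htmem
    rw [hGb] at this
    exact this
  have hFmono : MonotoneOn F (Set.Ici b) := by
    apply monotoneOn_of_deriv_nonneg (convex_Ici b)
    · intro t htmem
      exact (hFderiv t (lt_of_lt_of_le hb htmem)).continuousAt.continuousWithinAt
    · intro t htmem
      rw [interior_Ici] at htmem
      exact (hFderiv t (lt_trans hb htmem)).differentiableAt.differentiableWithinAt
    · intro t htmem
      rw [interior_Ici] at htmem
      rw [(hFderiv t (lt_trans hb htmem)).deriv]
      exact hGnonneg t (Set.mem_Ici.2 (le_of_lt htmem))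
  have hFb : F b = 0 := by
    rw [hF]
    simp only
    unfold E2
    have : (b ^ 2 + b ^ 2) / 2 = b ^ 2 := by ring
    rw [this]
    ring
  have := hFmono Set.self_mem_Ici (Set.mem_Ici.2 hab) hab
  rw [hFb] at this
  rw [hF] at this
  simp only at this
  linarith

lemma gross2pt {a b : ℝ} (ha : 0 ≤ a) (hb : 0 ≤ b) :
    E2 (a ^ 2) (b ^ 2) ≤ (a - b) ^ 2 / 2 := by
  have hzero : ∀ c : ℝ, 0 < c → E2 (c ^ 2) (0 ^ 2) ≤ (c - 0) ^ 2 / 2 := by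
    intro c hc
    unfold E2
    have h1 : Real.log ((c ^ 2 + 0 ^ 2) / 2) = Real.log (c ^ 2) - Real.log 2 := by
      rw [show (c ^ 2 + 0 ^ 2) / 2 = c ^ 2 / 2 by ring]
      exact Real.log_div (by positivity) (by norm_num)
    rw [h1]
    have h2 : Real.log 2 ≤ 1 := by
      have := Real.log_le_sub_one_of_pos (by norm_num : (0:ℝ) < 2)
      linarith
    have hc2 : 0 < c ^ 2 := by positivity
    nlinarith
  rcases eq_or_lt_of_le ha with ha' | ha' <;> rcases eq_or_lt_of_le hb with hb' | hb'
  · rw [← ha', ← hb']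
    unfold E2
    norm_num
  · rw [← ha']
    rw [E2_comm]
    have := hzero b hb'
    calc E2 (b ^ 2) (0 ^ 2) ≤ (b - 0) ^ 2 / 2 := this
      _ = (0 - b) ^ 2 / 2 := by ring
  · rw [← hb']
    exact hzero a ha'
  · rcases le_total b a with hab | hab
    · exact grossCore hb' hab
    · rw [E2_comm]
      calc E2 (b ^ 2) (a ^ 2) ≤ (b - a) ^ 2 / 2 := grossCore ha' hab
        _ = (a - b) ^ 2 / 2 := by ring

lemma expect_smul_sum {n : ℕ} (z : Cube n → ℝ) :
    expect z = ∑ x : Cube n, ((2:ℝ) ^ n)⁻¹ • z x := by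
  unfold expect
  rw [div_eq_mul_inv, mul_comm, Finset.mul_sum]
  exact Finset.sum_congr rfl fun x _ => by rw [smul_eq_mul]

lemma expect_rpow_jensen {n : ℕ} {z : Cube n → ℝ} (hz : ∀ x, 0 ≤ z x) {q : ℝ} (hq : 1 ≤ q) :
    (expect z) ^ q ≤ expect (fun x => z x ^ q) := by
  have hφ := convexOn_rpow hq
  have hw : ∀ x ∈ (Finset.univ : Finset (Cube n)), (0:ℝ) ≤ ((2:ℝ) ^ n)⁻¹ := by
    intro x _; positivity
  have hws : ∑ _x : Cube n, ((2:ℝ) ^ n)⁻¹ = 1 := by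
    rw [Finset.sum_const, Finset.card_univ, nsmul_eq_mul, card_cube]
    field_simp
  have hmem : ∀ x ∈ (Finset.univ : Finset (Cube n)), z x ∈ Set.Ici (0:ℝ) := fun x _ => hz x
  have := hφ.map_sum_le hw hws hmem
  rw [← expect_smul_sum] at this
  calc (expect z) ^ q ≤ ∑ x : Cube n, ((2:ℝ) ^ n)⁻¹ • (z x ^ q) := this
    _ = expect (fun x => z x ^ q) := (expect_smul_sum _).symm

lemma rpow_diff_sq_le {p u v : ℝ} (hp : 2 ≤ p) (hv : 0 ≤ v) (huv : v < u) :
    (u ^ (p/2) - v ^ (p/2)) ^ 2 ≤ (p/2) ^ 2 * u ^ (p - 2) * (u - v) ^ 2 := by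
  have hu : 0 < u := lt_of_le_of_lt hv huv
  set q := p / 2 with hqdef
  have hq1 : 1 ≤ q := by rw [hqdef]; linarith
  have hcont : ContinuousOn (fun t : ℝ => t ^ q) (Set.Icc v u) := by
    intro t _
    exact (Real.continuousAt_rpow_const t q (Or.inr (by linarith))).continuousWithinAt
  have hderiv : ∀ t ∈ Set.Ioo v u, HasDerivAt (fun t : ℝ => t ^ q) (q * t ^ (q - 1)) t := by
    intro t ht
    exact Real.hasDerivAt_rpow_const (Or.inl (ne_of_gt (lt_of_le_of_lt hv ht.1)))
  obtain ⟨c, hc, hceq⟩ := exists_hasDerivAt_eq_slope (fun t : ℝ => t ^ q)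
    (fun t => q * t ^ (q - 1)) huv hcont hderiv
  have hc0 : 0 < c := lt_of_le_of_lt hv hc.1
  have huv' : u - v ≠ 0 := ne_of_gt (by linarith)
  have heq : u ^ q - v ^ q = q * c ^ (q - 1) * (u - v) := by
    rw [hceq]
    field_simp
  have hbound : c ^ (q - 1) ≤ u ^ (q - 1) :=
    Real.rpow_le_rpow hc0.le hc.2.le (by linarith)
  have hcp : 0 ≤ c ^ (q - 1) := Real.rpow_nonneg hc0.le _
  have hup : 0 ≤ u ^ (q - 1) := Real.rpow_nonneg hu.le _
  have hsq : (u ^ (q - 1)) ^ 2 = u ^ (p - 2) := by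
    rw [sq, ← Real.rpow_add hu]
    congr 1
    rw [hqdef]; ring
  calc (u ^ q - v ^ q) ^ 2 = q ^ 2 * (c ^ (q - 1)) ^ 2 * (u - v) ^ 2 := by rw [heq]; ring
    _ ≤ q ^ 2 * (u ^ (q - 1)) ^ 2 * (u - v) ^ 2 := by
        have h2 : (c ^ (q - 1)) ^ 2 ≤ (u ^ (q - 1)) ^ 2 := pow_le_pow_left₀ hcp hbound 2
        have h3 := mul_le_mul_of_nonneg_left h2 (by positivity : (0:ℝ) ≤ q ^ 2 * (u - v) ^ 2)
        nlinarith [h3]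
    _ = q ^ 2 * u ^ (p - 2) * (u - v) ^ 2 := by rw [hsq]

noncomputable def ent {n : ℕ} (u : Cube n → ℝ) : ℝ :=
  expect (fun x => u x * Real.log (u x)) - (expect u) * Real.log (expect u)

lemma expect_succ {n : ℕ} (F : Cube (n + 1) → ℝ) :
    expect F = (expect (fun y : Cube n => F (Fin.cons true y)) +
      expect (fun y : Cube n => F (Fin.cons false y))) / 2 := by
  unfold expect
  rw [← add_div, div_div]
  have hsum : ∑ x : Cube (n + 1), F x
      = ∑ p : Bool × Cube n, F (Fin.cons p.1 p.2) :=
    (Fintype.sum_equiv (Fin.consEquiv (fun _ => Bool)) _ _ (fun p => rfl)).symm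
  rw [hsum, Fintype.sum_prod_type, Fintype.sum_bool, pow_succ]

lemma expect_add {n : ℕ} (F G : Cube n → ℝ) :
    expect (fun x => F x + G x) = expect F + expect G := by
  unfold expect
  rw [Finset.sum_add_distrib, add_div]

lemma expect_sub {n : ℕ} (F G : Cube n → ℝ) :
    expect (fun x => F x - G x) = expect F - expect G := by
  unfold expect
  rw [Finset.sum_sub_distrib, sub_div]

lemma expect_congr {n : ℕ} {F G : Cube n → ℝ} (h : ∀ x, F x = G x) : expect F = expect G := by
  unfold expect
  rw [Fintype.sum_congr _ _ h]

lemma expect_half_add {n : ℕ} (F G : Cube n → ℝ) :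
    expect (fun y => (F y + G y) / 2) = (expect F + expect G) / 2 := by
  unfold expect
  rw [← Finset.sum_div, Finset.sum_add_distrib]
  ring

theorem ent_le_sum_E2 : ∀ {n : ℕ} (u : Cube n → ℝ), (∀ x, 0 ≤ u x) →
    ent u ≤ ∑ i, expect (fun x => E2 (u x) (u (cflip i x))) := by
  intro n
  induction n with
  | zero =>
    intro u hu
    haveI : Subsingleton (Cube 0) := ⟨fun a b => funext fun i => i.elim0⟩
    have hexp : ∀ F : Cube 0 → ℝ, expect F = F (fun i => i.elim0) := by
      intro F
      unfold expect
      rw [pow_zero, div_one]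
      exact Fintype.sum_subsingleton _ _
    unfold ent
    rw [hexp, hexp]
    simp
  | succ n ih =>
    intro u hu
    set uT : Cube n → ℝ := fun y => u (Fin.cons true y) with huT
    set uF : Cube n → ℝ := fun y => u (Fin.cons false y) with huF
    set w : Cube n → ℝ := fun y => (uT y + uF y) / 2 with hw
    have hwn : ∀ y, 0 ≤ w y := fun y => by
      have := hu (Fin.cons true y); have := hu (Fin.cons false y)
      rw [hw]; dsimp only; rw [huT, huF]; dsimp only; positivity
    -- expectation identities
    have hEu : expect u = expect w := by
      rw [expect_succ u, hw]
      exact (expect_half_add uT uF).symm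
    -- chain rule equality
    have hchain : ent u = expect (fun y => E2 (uT y) (uF y)) + ent w := by
      unfold ent
      rw [expect_succ (fun x => u x * Real.log (u x)), hEu]
      have e1 : (fun y : Cube n => (fun x : Cube (n+1) => u x * Real.log (u x)) (Fin.cons true y))
          = fun y => uT y * Real.log (uT y) := rfl
      have e2 : (fun y : Cube n => (fun x : Cube (n+1) => u x * Real.log (u x)) (Fin.cons false y))
          = fun y => uF y * Real.log (uF y) := rfl
      rw [e1, e2]
      have e3 : expect (fun y => E2 (uT y) (uF y))
          = expect (fun y => (uT y * Real.log (uT y) + uF y * Real.log (uF y)) / 2)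
            - expect (fun y => w y * Real.log (w y)) := by
        rw [← expect_sub]
        apply expect_congr
        intro y
        unfold E2
        rw [hw]
      rw [e3]
      have e4 : expect (fun y => (uT y * Real.log (uT y) + uF y * Real.log (uF y)) / 2)
          = (expect (fun y => uT y * Real.log (uT y)) + expect (fun y => uF y * Real.log (uF y))) / 2 :=
        expect_half_add _ _
      rw [e4]
      ring
    rw [hchain]
    -- bound ent w by induction, then per-coordinate convexity
    have hindw := ih w hwn
    have hconv : ∀ i : Fin n, expect (fun y => E2 (w y) (w (cflip i y)))
        ≤ (expect (fun y => E2 (uT y) (uT (cflip i y)))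
            + expect (fun y => E2 (uF y) (uF (cflip i y)))) / 2 := by
      intro i
      have hpt : ∀ y, E2 (w y) (w (cflip i y))
          ≤ (E2 (uT y) (uT (cflip i y)) + E2 (uF y) (uF (cflip i y))) / 2 := by
        intro y
        have h1 := E2_midpoint (hu (Fin.cons true y)) (hu (Fin.cons true (cflip i y)))
          (hu (Fin.cons false y)) (hu (Fin.cons false (cflip i y)))
        rw [hw]
        dsimp only
        convert h1 using 3 <;> rw [huT, huF] <;> ring
      calc expect (fun y => E2 (w y) (w (cflip i y)))
          ≤ expect (fun y => (E2 (uT y) (uT (cflip i y)) + E2 (uF y) (uF (cflip i y))) / 2) :=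
            expect_mono hpt
        _ = (expect (fun y => E2 (uT y) (uT (cflip i y)))
              + expect (fun y => E2 (uF y) (uF (cflip i y)))) / 2 :=
            expect_half_add _ _
    -- identify target terms
    have hzero : expect (fun x : Cube (n+1) => E2 (u x) (u (cflip 0 x)))
        = expect (fun y : Cube n => E2 (uT y) (uF y)) := by
      rw [expect_succ (fun x : Cube (n+1) => E2 (u x) (u (cflip 0 x)))]
      have eT : (fun y : Cube n => E2 (u (Fin.cons true y)) (u (cflip 0 (Fin.cons true y))))
          = fun y => E2 (uT y) (uF y) := by
        funext y
        have : cflip (0 : Fin (n+1)) (Fin.cons true y) = Fin.cons false y := by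
          unfold cflip
          rw [show (Fin.cons true y : Cube (n+1)) 0 = true from Fin.cons_zero _ _]
          exact Fin.update_cons_zero _ _ _
        rw [this]
      have eF : (fun y : Cube n => E2 (u (Fin.cons false y)) (u (cflip 0 (Fin.cons false y))))
          = fun y => E2 (uF y) (uT y) := by
        funext y
        have : cflip (0 : Fin (n+1)) (Fin.cons false y) = Fin.cons true y := by
          unfold cflip
          rw [show (Fin.cons false y : Cube (n+1)) 0 = false from Fin.cons_zero _ _]
          exact Fin.update_cons_zero _ _ _
        rw [this]
      rw [show (fun y : Cube n => (fun x : Cube (n+1) => E2 (u x) (u (cflip 0 x))) (Fin.cons true y))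
          = fun y => E2 (u (Fin.cons true y)) (u (cflip 0 (Fin.cons true y))) from rfl, eT]
      rw [show (fun y : Cube n => (fun x : Cube (n+1) => E2 (u x) (u (cflip 0 x))) (Fin.cons false y))
          = fun y => E2 (u (Fin.cons false y)) (u (cflip 0 (Fin.cons false y))) from rfl, eF]
      rw [expect_congr (fun y => E2_comm (uF y) (uT y))]
      ring
    have hsucc : ∀ i : Fin n, expect (fun x : Cube (n+1) => E2 (u x) (u (cflip i.succ x)))
        = (expect (fun y : Cube n => E2 (uT y) (uT (cflip i y)))
            + expect (fun y : Cube n => E2 (uF y) (uF (cflip i y)))) / 2 := by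
      intro i
      rw [expect_succ (fun x : Cube (n+1) => E2 (u x) (u (cflip i.succ x)))]
      have ekey : ∀ b : Bool, ∀ y : Cube n,
          cflip (i.succ) (Fin.cons b y) = Fin.cons b (cflip i y) := by
        intro b y
        unfold cflip
        rw [show (Fin.cons b y : Cube (n+1)) i.succ = y i from Fin.cons_succ _ _ _]
        exact (Fin.cons_update (α := fun _ : Fin (n+1) => Bool) b y i (!y i)).symm
      have eT : expect (fun y : Cube n =>
            (fun x : Cube (n+1) => E2 (u x) (u (cflip i.succ x))) (Fin.cons true y))
          = expect (fun y : Cube n => E2 (uT y) (uT (cflip i y))) :=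
        expect_congr (fun y => by
          show E2 (u (Fin.cons true y)) (u (cflip i.succ (Fin.cons true y))) = _
          rw [ekey true y])
      have eF : expect (fun y : Cube n =>
            (fun x : Cube (n+1) => E2 (u x) (u (cflip i.succ x))) (Fin.cons false y))
          = expect (fun y : Cube n => E2 (uF y) (uF (cflip i y))) :=
        expect_congr (fun y => by
          show E2 (u (Fin.cons false y)) (u (cflip i.succ (Fin.cons false y))) = _
          rw [ekey false y])
      rw [eT, eF]
    rw [Fin.sum_univ_succ, hzero]
    have : ∑ i : Fin n, expect (fun x : Cube (n+1) => E2 (u x) (u (cflip i.succ x)))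
        = ∑ i : Fin n, (expect (fun y : Cube n => E2 (uT y) (uT (cflip i y)))
            + expect (fun y : Cube n => E2 (uF y) (uF (cflip i y)))) / 2 :=
      Finset.sum_congr rfl fun i _ => hsucc i
    rw [this]
    have hsum : ent w ≤ ∑ i : Fin n, (expect (fun y : Cube n => E2 (uT y) (uT (cflip i y)))
        + expect (fun y : Cube n => E2 (uF y) (uF (cflip i y)))) / 2 :=
      le_trans hindw (Finset.sum_le_sum fun i _ => hconv i)
    linarith

lemma expect_const_mul {n : ℕ} (c : ℝ) (F : Cube n → ℝ) :
    expect (fun x => c * F x) = c * expect F := by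
  unfold expect
  rw [← Finset.mul_sum, mul_div_assoc]

lemma expect_const {n : ℕ} (c : ℝ) : expect (fun _ : Cube n => c) = c := by
  unfold expect
  rw [Finset.sum_const, Finset.card_univ, nsmul_eq_mul, card_cube]
  field_simp

lemma expect_sum_comm {n : ℕ} (F : Fin n → Cube n → ℝ) :
    ∑ i, expect (fun x => F i x) = expect (fun x => ∑ i, F i x) := by
  unfold expect
  rw [← Finset.sum_div]
  congr 1
  exact Finset.sum_comm

theorem part2 {E : Type*} [NormedAddCommGroup E] [NormedSpace ℝ E] {n : ℕ} (f : Cube n → E)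
    (hLip : ∀ x : Cube n,
      expect (fun δ : Cube n => ‖∑ i, sgn (δ i) • Di f i x‖ ^ 2) ≤ 1) :
    ∀ p : ℝ, 2 ≤ p →
      expect (fun x => ‖f x‖ ^ p * Real.log ‖f x‖) ≤
        (1 / p) * expect (fun x => ‖f x‖ ^ p) *
            Real.log (expect (fun x => ‖f x‖ ^ p)) +
          p * (expect (fun x => ‖f x‖ ^ p)) ^ (1 - 2 / p) := by
  intro p hp
  have hp0 : 0 < p := by linarith
  set g : Cube n → ℝ := fun x => ‖f x‖ with hg
  set u : Cube n → ℝ := fun x => g x ^ p with hu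
  have hgn : ∀ x, 0 ≤ g x := fun x => norm_nonneg _
  have hun : ∀ x, 0 ≤ u x := fun x => Real.rpow_nonneg (hgn x) _
  set a := expect u with ha
  have han : 0 ≤ a := expect_nonneg hun
  -- Step 1 : rewrite LHS
  have hlog : ∀ x, g x ^ p * Real.log (g x) = (1/p) * (u x * Real.log (u x)) := by
    intro x
    by_cases h : g x = 0
    · rw [hu]
      dsimp only
      rw [h, Real.zero_rpow (ne_of_gt hp0), Real.log_zero]
      ring
    · have hpos : 0 < g x := lt_of_le_of_ne (hgn x) (Ne.symm h)
      rw [hu]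
      dsimp only
      rw [Real.log_rpow hpos]
      field_simp
  have hLHS : expect (fun x => ‖f x‖ ^ p * Real.log ‖f x‖)
      = (1/p) * (ent u + a * Real.log a) := by
    have e1 : expect (fun x => ‖f x‖ ^ p * Real.log ‖f x‖)
        = expect (fun x => (1/p) * (u x * Real.log (u x))) := expect_congr (fun x => hlog x)
    rw [e1, expect_const_mul]
    unfold ent
    rw [← ha]
    ring
  -- Step 2 : entropy bound
  have hent : ent u ≤ p ^ 2 * expect (fun x => g x ^ (p - 2)) := by
    have h2a := ent_le_sum_E2 u hun
    have husq : ∀ x : Cube n, u x = (g x ^ (p/2)) ^ 2 := by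
      intro x
      rw [hu]
      dsimp only
      rw [← Real.rpow_natCast (g x ^ (p/2)) 2, ← Real.rpow_mul (hgn x)]
      norm_num
    have h2b : ∀ i : Fin n, ∀ x : Cube n, E2 (u x) (u (cflip i x))
        ≤ (g x ^ (p/2) - g (cflip i x) ^ (p/2)) ^ 2 / 2 := by
      intro i x
      rw [husq x, husq (cflip i x)]
      exact gross2pt (Real.rpow_nonneg (hgn x) _) (Real.rpow_nonneg (hgn (cflip i x)) _)
    set T : Cube n → Fin n → ℝ :=
      fun x i => (g x ^ (p/2) - g (cflip i x) ^ (p/2)) ^ 2 with hT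
    set T' : Cube n → Fin n → ℝ :=
      fun x i => if g (cflip i x) < g x then T x i else 0 with hT'
    set T'' : Cube n → Fin n → ℝ :=
      fun x i => if g x < g (cflip i x) then T x i else 0 with hT''
    have step1 : ent u ≤ expect (fun x => ∑ i, T x i) / 2 := by
      calc ent u ≤ ∑ i, expect (fun x => E2 (u x) (u (cflip i x))) := h2a
        _ ≤ ∑ i, expect (fun x => T x i / 2) :=
            Finset.sum_le_sum fun i _ => expect_mono (fun x => h2b i x)
        _ = expect (fun x => ∑ i, T x i / 2) := expect_sum_comm _
        _ = expect (fun x => (∑ i, T x i) / 2) :=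
            expect_congr (fun x => (Finset.sum_div _ _ _).symm)
        _ = expect (fun x => ∑ i, T x i) / 2 := by
            unfold expect
            rw [← Finset.sum_div]
            ring
    have hsplit : ∀ x i, T x i ≤ T' x i + T'' x i := by
      intro x i
      rcases lt_trichotomy (g (cflip i x)) (g x) with h | h | h
      · rw [hT', hT'']
        dsimp only
        rw [if_pos h, if_neg (by linarith)]
        have : 0 ≤ T x i := by rw [hT]; positivity
        linarith
      · have hTz : T x i = 0 := by rw [hT]; dsimp only; rw [h]; ring
        rw [hT', hT'']
        dsimp only
        rw [hTz]
        split <;> split <;> norm_num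
      · rw [hT', hT'']
        dsimp only
        rw [if_pos h, if_neg (by linarith)]
        have : 0 ≤ T x i := by rw [hT]; positivity
        linarith
    have hsymm : expect (fun x => ∑ i, T'' x i) = expect (fun x => ∑ i, T' x i) := by
      unfold expect
      congr 1
      rw [Finset.sum_comm, Finset.sum_comm (f := fun x i => T' x i)]
      apply Finset.sum_congr rfl
      intro i _
      have := sum_cflip i (fun x => T'' x i)
      rw [← this]
      apply Fintype.sum_congr
      intro x
      rw [hT'', hT', hT]
      dsimp only
      rw [(cflip_invol i) x]
      split
      · ring
      · rfl
    have step2 : expect (fun x => ∑ i, T x i) ≤ 2 * expect (fun x => ∑ i, T' x i) := by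
      have h1 : expect (fun x => ∑ i, T x i)
          ≤ expect (fun x => ∑ i, (T' x i + T'' x i)) :=
        expect_mono (fun x => Finset.sum_le_sum fun i _ => hsplit x i)
      have h2 : expect (fun x => ∑ i, (T' x i + T'' x i))
          = expect (fun x => ∑ i, T' x i) + expect (fun x => ∑ i, T'' x i) := by
        rw [← expect_add]
        apply expect_congr
        intro x
        rw [Finset.sum_add_distrib]
      rw [h2, hsymm] at h1
      linarith
    have step3 : ∀ x, ∑ i, T' x i ≤ p ^ 2 / 2 * g x ^ (p - 2) * 2 := by
      intro x
      have hper : ∀ i : Fin n, T' x i ≤ (p/2) ^ 2 * g x ^ (p - 2) *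
          (if g (cflip i x) < g x then (g x - g (cflip i x)) ^ 2 else 0) := by
        intro i
        by_cases h : g (cflip i x) < g x
        · rw [hT', hT]
          dsimp only
          rw [if_pos h, if_pos h]
          have := rpow_diff_sq_le hp (hgn (cflip i x)) h
          calc (g x ^ (p/2) - g (cflip i x) ^ (p/2)) ^ 2
              ≤ (p/2) ^ 2 * g x ^ (p-2) * (g x - g (cflip i x)) ^ 2 := this
            _ = (p/2) ^ 2 * g x ^ (p-2) * (g x - g (cflip i x)) ^ 2 := rfl
        · rw [hT']
          dsimp only
          rw [if_neg h, if_neg h]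
          norm_num
      calc ∑ i, T' x i ≤ ∑ i, (p/2) ^ 2 * g x ^ (p - 2) *
            (if g (cflip i x) < g x then (g x - g (cflip i x)) ^ 2 else 0) :=
          Finset.sum_le_sum fun i _ => hper i
        _ = (p/2) ^ 2 * g x ^ (p - 2) *
            (∑ i, if g (cflip i x) < g x then (g x - g (cflip i x)) ^ 2 else 0) := by
          rw [Finset.mul_sum]
        _ ≤ (p/2) ^ 2 * g x ^ (p - 2) * 4 := by
          apply mul_le_mul_of_nonneg_left (grad_bound f hLip x)
          positivity
        _ = p ^ 2 / 2 * g x ^ (p - 2) * 2 := by ring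
    calc ent u ≤ expect (fun x => ∑ i, T x i) / 2 := step1
      _ ≤ 2 * expect (fun x => ∑ i, T' x i) / 2 := by linarith [step2]
      _ = expect (fun x => ∑ i, T' x i) := by ring
      _ ≤ expect (fun x => p ^ 2 / 2 * g x ^ (p - 2) * 2) := expect_mono step3
      _ = p ^ 2 * expect (fun x => g x ^ (p - 2)) := by
          rw [show (fun x => p ^ 2 / 2 * g x ^ (p - 2) * 2) = fun x => p ^ 2 * (g x ^ (p - 2)) by
            funext x; ring]
          rw [expect_const_mul]
  -- Step 2h : Hölder
  have hhold : expect (fun x => g x ^ (p - 2)) ≤ a ^ (1 - 2/p) := by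
    rcases eq_or_lt_of_le hp with hp2 | hp2
    · have e1 : (fun x => g x ^ (p - 2)) = fun _ : Cube n => (1:ℝ) := by
        funext x
        rw [← hp2]
        norm_num
      have e2 : (1:ℝ) - 2/p = 0 := by rw [← hp2]; norm_num
      rw [e1, e2, expect_const, Real.rpow_zero]
    · set q := p / (p - 2) with hq
      have hp2' : 0 < p - 2 := by linarith
      have hq1 : 1 ≤ q := by
        rw [hq, le_div_iff₀ hp2']
        linarith
      have hzq : ∀ x, (g x ^ (p - 2)) ^ q = u x := by
        intro x
        rw [← Real.rpow_mul (hgn x)]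
        rw [hu]
        dsimp only
        congr 1
        rw [hq]
        field_simp
      have hj := expect_rpow_jensen (z := fun x => g x ^ (p - 2))
        (fun x => Real.rpow_nonneg (hgn x) _) hq1
      rw [expect_congr hzq, ← ha] at hj
      have hEz : 0 ≤ expect (fun x => g x ^ (p - 2)) :=
        expect_nonneg (fun x => Real.rpow_nonneg (hgn x) _)
      have hq0 : 0 < q := by linarith
      have h1 : (expect (fun x => g x ^ (p - 2)) ^ q) ^ (1/q) ≤ a ^ (1/q) :=
        Real.rpow_le_rpow (Real.rpow_nonneg hEz _) hj (by positivity)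
      rw [← Real.rpow_mul hEz, mul_one_div, div_self (ne_of_gt hq0), Real.rpow_one] at h1
      have hfin : (1:ℝ)/q = 1 - 2/p := by
        rw [hq]
        field_simp
        try ring
      rw [hfin] at h1
      exact h1
  -- combine
  rw [hLHS]
  have hcomb : ent u + a * Real.log a ≤ p ^ 2 * a ^ (1 - 2/p) + a * Real.log a := by
    have := le_trans hent (mul_le_mul_of_nonneg_left hhold (by positivity : (0:ℝ) ≤ p ^ 2))
    linarith
  have hfinal := mul_le_mul_of_nonneg_left hcomb (by positivity : (0:ℝ) ≤ 1/p)
  calc (1/p) * (ent u + a * Real.log a)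
      ≤ (1/p) * (p ^ 2 * a ^ (1 - 2/p) + a * Real.log a) := hfinal
    _ = (1/p) * a * Real.log a + p * a ^ (1 - 2/p) := by
        field_simp
        ring

/-- Let `f : Ω₂ⁿ → E` satisfy the Lipschitz condition `P²(f) ≤ 1` and be not
identically zero, and put `a(p) := 𝔼‖f‖^p`. Then `a` is differentiable with
`a'(p) = 𝔼(‖f‖^p · log ‖f‖)` for every `p > 0` (convention `0^p·log 0 = 0`), and
`a'(p) ≤ (1/p)·a(p)·log a(p) + p·a(p)^{1−2/p}` for every `p ≥ 2`. -/
theorem moment_function_differential_inequality {E : Type*} [NormedAddCommGroup E]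
    [NormedSpace ℝ E] {n : ℕ} (f : Cube n → E)
    (hLip : ∀ x : Cube n,
      expect (fun δ : Cube n => ‖∑ i, sgn (δ i) • Di f i x‖ ^ 2) ≤ 1)
    (hne : ∃ x : Cube n, f x ≠ 0) :
    (∀ p : ℝ, 0 < p →
        HasDerivAt (fun q : ℝ => expect (fun x => ‖f x‖ ^ q))
          (expect (fun x => ‖f x‖ ^ p * Real.log ‖f x‖)) p) ∧
      ∀ p : ℝ, 2 ≤ p →
        expect (fun x => ‖f x‖ ^ p * Real.log ‖f x‖) ≤
          (1 / p) * expect (fun x => ‖f x‖ ^ p) *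
              Real.log (expect (fun x => ‖f x‖ ^ p)) +
            p * (expect (fun x => ‖f x‖ ^ p)) ^ (1 - 2 / p) := by
  exact ⟨part1 f, part2 f hLip⟩
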